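/- arXiv:2602.07890 — 4 statements merged into one kernel-verified Lean document; each statement's English description precedes it below -/
import Mathlib

section
/- For distinct indices i,j,k and distinct indices p,q,r in {1,...,n}, if the set {i,j,k,p,q,r} has at least 5 elements (equivalently |{i,j,k} ∩ {p,q,r}| ≤ 1), then the endomorphisms ρ_{ijk} and ρ_{pqr} of V commute: ρ_{ijk} ∘ ρ_{pqr} = ρ_{pqr} ∘ ρ_{ijk}. -/
set_option maxHeartbeats 1000000

open Finsupp

/-- The Laurent polynomial ring `A = ℤ[t₁^±,…,tₙ^±,s₁^±,…,sₙ^±]`, realized as the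
group algebra of the free abelian group on `Fin n ⊕ Fin n`. -/
abbrev A (n : ℕ) : Type := AddMonoidAlgebra ℤ ((Fin n ⊕ Fin n) →₀ ℤ)

/-- The variable `tᵢ`. -/
noncomputable def t {n : ℕ} (i : Fin n) : A n :=
  AddMonoidAlgebra.single (Finsupp.single (Sum.inl i) 1) 1

/-- The variable `tᵢ⁻¹`. -/
noncomputable def tInv {n : ℕ} (i : Fin n) : A n :=
  AddMonoidAlgebra.single (Finsupp.single (Sum.inl i) (-1)) 1

/-- The variable `sⱼ`. -/
noncomputable def s {n : ℕ} (j : Fin n) : A n :=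
  AddMonoidAlgebra.single (Finsupp.single (Sum.inr j) 1) 1

/-- The variable `sⱼ⁻¹`. -/
noncomputable def sInv {n : ℕ} (j : Fin n) : A n :=
  AddMonoidAlgebra.single (Finsupp.single (Sum.inr j) (-1)) 1

/-- Ordered pairs of distinct indices, indexing the basis `x_{pq}`. -/
abbrev Pair (n : ℕ) := {p : Fin n × Fin n // p.1 ≠ p.2}

/-- The free `A`-module `V` on the basis `{x_{pq} : p ≠ q}`. -/
abbrev V (n : ℕ) := Pair n →₀ A n

/-- The basis vector `x_{pq}`. -/
noncomputable def bas {n : ℕ} (p q : Fin n) (h : p ≠ q) : V n := Finsupp.single ⟨(p, q), h⟩ 1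

/-- Image of the basis vector `x_{p}` under `ρ_{ijk}`. -/
noncomputable def rhoFun {n : ℕ} (i j k : Fin n) (hij : i ≠ j) (hjk : j ≠ k) (hik : i ≠ k)
    (p : Pair n) : V n :=
  if p.1 = (i, j) then t i • bas i j hij + (1 - t i) • bas i k hik
  else if p.1 = (k, j) then tInv k • bas k j hjk.symm + (1 - tInv k) • bas k i hik.symm
  else if p.1 = (j, k) then s j • bas j k hjk
  else if p.1 = (j, i) then sInv j • bas j i hij.symm
  else Finsupp.single p 1

/-- The endomorphism `ρ_{ijk} ∈ End_A(V)`. -/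
noncomputable def rho {n : ℕ} (i j k : Fin n) (hij : i ≠ j) (hjk : j ≠ k) (hik : i ≠ k) :
    V n →ₗ[A n] V n :=
  Finsupp.linearCombination (A n) (rhoFun i j k hij hjk hik)


section Aux

variable {n : ℕ}

lemma rho_apply_single (i j k : Fin n) (hij : i ≠ j) (hjk : j ≠ k) (hik : i ≠ k) (x : Pair n) :
    rho i j k hij hjk hik (Finsupp.single x 1) = rhoFun i j k hij hjk hik x := by
  simp [rho, Finsupp.linearCombination_single]

lemma rho_fixes (i j k : Fin n) (hij : i ≠ j) (hjk : j ≠ k) (hik : i ≠ k) (x : Pair n)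
    (h1 : x.1 ≠ (i, j)) (h2 : x.1 ≠ (k, j)) (h3 : x.1 ≠ (j, k)) (h4 : x.1 ≠ (j, i)) :
    rho i j k hij hjk hik (Finsupp.single x 1) = Finsupp.single x 1 := by
  rw [rho_apply_single, rhoFun, if_neg h1, if_neg h2, if_neg h3, if_neg h4]

lemma main_aux (i j k p q r : Fin n)
    (hij : i ≠ j) (hjk : j ≠ k) (hik : i ≠ k)
    (hpq : p ≠ q) (hqr : q ≠ r) (hpr : p ≠ r)
    (hd : ∀ a b : Fin n, a ≠ b → (a = i ∨ a = j ∨ a = k) → (b = i ∨ b = j ∨ b = k) →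
      (a = p ∨ a = q ∨ a = r) → (b = p ∨ b = q ∨ b = r) → False)
    (x : Pair n) (hx : rho p q r hpq hqr hpr (Finsupp.single x 1) = Finsupp.single x 1) :
    rho i j k hij hjk hik (rho p q r hpq hqr hpr (Finsupp.single x 1)) =
      rho p q r hpq hqr hpr (rho i j k hij hjk hik (Finsupp.single x 1)) := by
  have fix2 : ∀ (c d : Fin n) (hcd : c ≠ d), (c = i ∨ c = j ∨ c = k) → (d = i ∨ d = j ∨ d = k) →
      rho p q r hpq hqr hpr (bas c d hcd) = bas c d hcd := by
    intro c d hcd hc hd'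
    refine rho_fixes p q r hpq hqr hpr _ ?_ ?_ ?_ ?_ <;>
      (intro h; rw [Prod.mk.injEq] at h; exact hd c d hcd hc hd' (by tauto) (by tauto))
  rw [hx, rho_apply_single, rhoFun]
  split_ifs with h1 h2 h3 h4
  · rw [map_add, LinearMap.map_smul, LinearMap.map_smul,
      fix2 i j hij (by tauto) (by tauto), fix2 i k hik (by tauto) (by tauto)]
  · rw [map_add, LinearMap.map_smul, LinearMap.map_smul,
      fix2 k j hjk.symm (by tauto) (by tauto), fix2 k i hik.symm (by tauto) (by tauto)]
  · rw [LinearMap.map_smul, fix2 j k hjk (by tauto) (by tauto)]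
  · rw [LinearMap.map_smul, fix2 j i hij.symm (by tauto) (by tauto)]
  · exact hx.symm

end Aux

/-- Far commutativity: if `{i,j,k,p,q,r}` has at least 5 elements then `ρ_{ijk}` and
`ρ_{pqr}` commute. -/
theorem stmt_1 (n : ℕ) (i j k p q r : Fin n)
    (hij : i ≠ j) (hjk : j ≠ k) (hik : i ≠ k)
    (hpq : p ≠ q) (hqr : q ≠ r) (hpr : p ≠ r)
    (hcard : 5 ≤ ({i, j, k, p, q, r} : Finset (Fin n)).card) :
    (rho i j k hij hjk hik).comp (rho p q r hpq hqr hpr) =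
      (rho p q r hpq hqr hpr).comp (rho i j k hij hjk hik) := by
  have hd : ∀ a b : Fin n, a ≠ b → (a = i ∨ a = j ∨ a = k) → (b = i ∨ b = j ∨ b = k) →
      (a = p ∨ a = q ∨ a = r) → (b = p ∨ b = q ∨ b = r) → False := by
    intro a b hab ha hb ha' hb'
    have hsub : ({i, j, k, p, q, r} : Finset (Fin n)) = {i, j, k} ∪ {p, q, r} := by
      clear hab ha hb ha' hb' hcard
      ext z
      simp only [Finset.mem_insert, Finset.mem_union, Finset.mem_singleton]
      tauto
    have h1 : ({a, b} : Finset (Fin n)) ⊆ {i, j, k} ∩ {p, q, r} := by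
      intro z hz
      simp only [Finset.mem_insert, Finset.mem_singleton] at hz
      simp only [Finset.mem_inter, Finset.mem_insert, Finset.mem_singleton]
      rcases hz with rfl | rfl
      · exact ⟨ha, ha'⟩
      · exact ⟨hb, hb'⟩
    have h2 : 2 ≤ (({i, j, k} : Finset (Fin n)) ∩ {p, q, r}).card := by
      calc 2 = ({a, b} : Finset (Fin n)).card := by
            rw [Finset.card_insert_of_notMem (by simpa using hab), Finset.card_singleton]
        _ ≤ _ := Finset.card_le_card h1
    have h3 := Finset.card_inter_add_card_union ({i, j, k} : Finset (Fin n)) {p, q, r}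
    have h4a := Finset.card_insert_le i ({j, k} : Finset (Fin n))
    have h4b := Finset.card_insert_le j ({k} : Finset (Fin n))
    have h4c : ({k} : Finset (Fin n)).card = 1 := Finset.card_singleton k
    have h5a := Finset.card_insert_le p ({q, r} : Finset (Fin n))
    have h5b := Finset.card_insert_le q ({r} : Finset (Fin n))
    have h5c : ({r} : Finset (Fin n)).card = 1 := Finset.card_singleton r
    rw [hsub] at hcard
    omega
  apply Finsupp.lhom_ext'
  intro x
  apply LinearMap.ext_ring
  simp only [LinearMap.comp_apply, Finsupp.lsingle_apply]
  by_cases h1 : x.1 = (p, q) ∨ x.1 = (r, q) ∨ x.1 = (q, r) ∨ x.1 = (q, p)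
  · have key : ∃ a b : Fin n, x.1 = (a, b) ∧ a ≠ b ∧ (a = p ∨ a = q ∨ a = r) ∧
        (b = p ∨ b = q ∨ b = r) := by
      rcases h1 with h | h | h | h
      · exact ⟨p, q, h, hpq, Or.inl rfl, Or.inr (Or.inl rfl)⟩
      · exact ⟨r, q, h, Ne.symm hqr, Or.inr (Or.inr rfl), Or.inr (Or.inl rfl)⟩
      · exact ⟨q, r, h, hqr, Or.inr (Or.inl rfl), Or.inr (Or.inr rfl)⟩
      · exact ⟨q, p, h, Ne.symm hpq, Or.inr (Or.inl rfl), Or.inl rfl⟩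
    obtain ⟨a, b, hxab, hab, ha, hb⟩ := key
    have hx : rho i j k hij hjk hik (Finsupp.single x 1) = Finsupp.single x 1 := by
      refine rho_fixes i j k hij hjk hik x ?_ ?_ ?_ ?_ <;> rw [hxab] <;> simp only [ne_eq, Prod.mk.injEq, not_and]
      · exact fun h1' h2' => hd a b hab (Or.inl h1') (Or.inr (Or.inl h2')) ha hb
      · exact fun h1' h2' => hd a b hab (Or.inr (Or.inr h1')) (Or.inr (Or.inl h2')) ha hb
      · exact fun h1' h2' => hd a b hab (Or.inr (Or.inl h1')) (Or.inr (Or.inr h2')) ha hb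
      · exact fun h1' h2' => hd a b hab (Or.inr (Or.inl h1')) (Or.inl h2') ha hb
    exact (main_aux p q r i j k hpq hqr hpr hij hjk hik
      (fun a b hab h1 h2 h3 h4 => hd a b hab h3 h4 h1 h2) x hx).symm
  · push_neg at h1
    have hx := rho_fixes p q r hpq hqr hpr x h1.1 h1.2.1 h1.2.2.1 h1.2.2.2
    exact main_aux i j k p q r hij hjk hik hpq hqr hpr hd x hx
end

section
/- For four distinct indices i,j,k,l in {1,...,n}, the endomorphisms ρ_{ijk} satisfy the tetrahedron relation ρ_{ijk} ∘ ρ_{ijl} ∘ ρ_{ikl} ∘ ρ_{jkl} = ρ_{jkl} ∘ ρ_{ikl} ∘ ρ_{ijl} ∘ ρ_{ijk} as maps on V. -/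
open Finsupp

@[simp] lemma t_mul_tInv {n : ℕ} (i : Fin n) : t i * tInv i = 1 := by
  simp [t, tInv, AddMonoidAlgebra.single_mul_single, ← Finsupp.single_add]; rfl

@[simp] lemma tInv_mul_t {n : ℕ} (i : Fin n) : tInv i * t i = 1 := by
  rw [mul_comm]; exact t_mul_tInv i

@[simp] lemma s_mul_sInv {n : ℕ} (j : Fin n) : s j * sInv j = 1 := by
  simp [s, sInv, AddMonoidAlgebra.single_mul_single, ← Finsupp.single_add]; rfl

@[simp] lemma sInv_mul_s {n : ℕ} (j : Fin n) : sInv j * s j = 1 := by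
  rw [mul_comm]; exact s_mul_sInv j

lemma rho_single {n : ℕ} (i j k : Fin n) (hij : i ≠ j) (hjk : j ≠ k) (hik : i ≠ k)
    (p : Pair n) (c : A n) :
    rho i j k hij hjk hik (Finsupp.single p c) = c • rhoFun i j k hij hjk hik p :=
  Finsupp.linearCombination_single _ _ _

set_option maxHeartbeats 2000000 in
/-- The tetrahedron relation
`ρ_{ijk} ∘ ρ_{ijl} ∘ ρ_{ikl} ∘ ρ_{jkl} = ρ_{jkl} ∘ ρ_{ikl} ∘ ρ_{ijl} ∘ ρ_{ijk}`. -/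
theorem stmt_2 (n : ℕ) (i j k l : Fin n)
    (hij : i ≠ j) (hik : i ≠ k) (hil : i ≠ l)
    (hjk : j ≠ k) (hjl : j ≠ l) (hkl : k ≠ l) :
    ((rho i j k hij hjk hik).comp ((rho i j l hij hjl hil).comp
        ((rho i k l hik hkl hil).comp (rho j k l hjk hkl hjl)))) =
      ((rho j k l hjk hkl hjl).comp ((rho i k l hik hkl hil).comp
        ((rho i j l hij hjl hil).comp (rho i j k hij hjk hik)))) := by
  apply Finsupp.lhom_ext
  intro p c
  obtain ⟨⟨a, b⟩, hab⟩ := p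
  by_cases h1 : (a, b) = (i, j)
  case pos =>
    rw [Prod.mk.injEq] at h1
    obtain ⟨rfl, rfl⟩ := h1
    simp only [LinearMap.comp_apply, rho_single, bas, rhoFun, Prod.mk.injEq, map_add,
      map_smul, hij, hik, hil, hjk, hjl, hkl, hij.symm, hik.symm, hil.symm, hjk.symm,
      hjl.symm, hkl.symm, smul_add, smul_smul, one_smul, if_true, if_false, and_true,
      and_false, true_and, false_and, not_false_iff, eq_self_iff_true, ite_true, ite_false]
    try module
  by_cases h2 : (a, b) = (j, i)
  case pos =>
    rw [Prod.mk.injEq] at h2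
    obtain ⟨rfl, rfl⟩ := h2
    simp only [LinearMap.comp_apply, rho_single, bas, rhoFun, Prod.mk.injEq, map_add,
      map_smul, hij, hik, hil, hjk, hjl, hkl, hij.symm, hik.symm, hil.symm, hjk.symm,
      hjl.symm, hkl.symm, smul_add, smul_smul, one_smul, if_true, if_false, and_true,
      and_false, true_and, false_and, not_false_iff, eq_self_iff_true, ite_true, ite_false]
    try module
  by_cases h3 : (a, b) = (i, k)
  case pos =>
    rw [Prod.mk.injEq] at h3
    obtain ⟨rfl, rfl⟩ := h3
    simp only [LinearMap.comp_apply, rho_single, bas, rhoFun, Prod.mk.injEq, map_add,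
      map_smul, hij, hik, hil, hjk, hjl, hkl, hij.symm, hik.symm, hil.symm, hjk.symm,
      hjl.symm, hkl.symm, smul_add, smul_smul, one_smul, if_true, if_false, and_true,
      and_false, true_and, false_and, not_false_iff, eq_self_iff_true, ite_true, ite_false]
    try module
  by_cases h4 : (a, b) = (k, i)
  case pos =>
    rw [Prod.mk.injEq] at h4
    obtain ⟨rfl, rfl⟩ := h4
    simp only [LinearMap.comp_apply, rho_single, bas, rhoFun, Prod.mk.injEq, map_add,
      map_smul, hij, hik, hil, hjk, hjl, hkl, hij.symm, hik.symm, hil.symm, hjk.symm,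
      hjl.symm, hkl.symm, smul_add, smul_smul, one_smul, if_true, if_false, and_true,
      and_false, true_and, false_and, not_false_iff, eq_self_iff_true, ite_true, ite_false]
    try module
  by_cases h5 : (a, b) = (j, k)
  case pos =>
    rw [Prod.mk.injEq] at h5
    obtain ⟨rfl, rfl⟩ := h5
    simp only [LinearMap.comp_apply, rho_single, bas, rhoFun, Prod.mk.injEq, map_add,
      map_smul, hij, hik, hil, hjk, hjl, hkl, hij.symm, hik.symm, hil.symm, hjk.symm,
      hjl.symm, hkl.symm, smul_add, smul_smul, one_smul, if_true, if_false, and_true,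
      and_false, true_and, false_and, not_false_iff, eq_self_iff_true, ite_true, ite_false]
    try module
  by_cases h6 : (a, b) = (k, j)
  case pos =>
    rw [Prod.mk.injEq] at h6
    obtain ⟨rfl, rfl⟩ := h6
    simp only [LinearMap.comp_apply, rho_single, bas, rhoFun, Prod.mk.injEq, map_add,
      map_smul, hij, hik, hil, hjk, hjl, hkl, hij.symm, hik.symm, hil.symm, hjk.symm,
      hjl.symm, hkl.symm, smul_add, smul_smul, one_smul, if_true, if_false, and_true,
      and_false, true_and, false_and, not_false_iff, eq_self_iff_true, ite_true, ite_false]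
    try module
  by_cases h7 : (a, b) = (j, l)
  case pos =>
    rw [Prod.mk.injEq] at h7
    obtain ⟨rfl, rfl⟩ := h7
    simp only [LinearMap.comp_apply, rho_single, bas, rhoFun, Prod.mk.injEq, map_add,
      map_smul, hij, hik, hil, hjk, hjl, hkl, hij.symm, hik.symm, hil.symm, hjk.symm,
      hjl.symm, hkl.symm, smul_add, smul_smul, one_smul, if_true, if_false, and_true,
      and_false, true_and, false_and, not_false_iff, eq_self_iff_true, ite_true, ite_false]
    try module
  by_cases h8 : (a, b) = (l, j)
  case pos =>
    rw [Prod.mk.injEq] at h8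
    obtain ⟨rfl, rfl⟩ := h8
    simp only [LinearMap.comp_apply, rho_single, bas, rhoFun, Prod.mk.injEq, map_add,
      map_smul, hij, hik, hil, hjk, hjl, hkl, hij.symm, hik.symm, hil.symm, hjk.symm,
      hjl.symm, hkl.symm, smul_add, smul_smul, one_smul, if_true, if_false, and_true,
      and_false, true_and, false_and, not_false_iff, eq_self_iff_true, ite_true, ite_false]
    try module
  by_cases h9 : (a, b) = (k, l)
  case pos =>
    rw [Prod.mk.injEq] at h9
    obtain ⟨rfl, rfl⟩ := h9
    simp only [LinearMap.comp_apply, rho_single, bas, rhoFun, Prod.mk.injEq, map_add,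
      map_smul, hij, hik, hil, hjk, hjl, hkl, hij.symm, hik.symm, hil.symm, hjk.symm,
      hjl.symm, hkl.symm, smul_add, smul_smul, one_smul, if_true, if_false, and_true,
      and_false, true_and, false_and, not_false_iff, eq_self_iff_true, ite_true, ite_false]
    try module
  by_cases h10 : (a, b) = (l, k)
  case pos =>
    rw [Prod.mk.injEq] at h10
    obtain ⟨rfl, rfl⟩ := h10
    simp only [LinearMap.comp_apply, rho_single, bas, rhoFun, Prod.mk.injEq, map_add,
      map_smul, hij, hik, hil, hjk, hjl, hkl, hij.symm, hik.symm, hil.symm, hjk.symm,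
      hjl.symm, hkl.symm, smul_add, smul_smul, one_smul, if_true, if_false, and_true,
      and_false, true_and, false_and, not_false_iff, eq_self_iff_true, ite_true, ite_false]
    try module
  simp only [Prod.mk.injEq] at h1 h2 h3 h4 h5 h6 h7 h8 h9 h10
  simp only [LinearMap.comp_apply, rho_single, bas, rhoFun, Prod.mk.injEq, map_add,
    map_smul, h1, h2, h3, h4, h5, h6, h7, h8, h9, h10, smul_add, smul_smul, one_smul,
    if_true, if_false, and_true, and_false, true_and, false_and, not_false_iff,
    eq_self_iff_true, ite_true, ite_false]
end

section
/- The assignment a_{ijk} ↦ ρ_{ijk} extends to a well-defined group homomorphism from the group Ĝ³_n (presented by generators a_{ijk} for distinct i,j,k with relations a_{kji} = a_{ijk}^{-1}, commutation a_{ijk}a_{pqr} = a_{pqr}a_{ijk} whenever |{i,j,k,p,q,r}| ≥ 5, and a_{ijk}a_{ijl}a_{ikl}a_{jkl} = a_{jkl}a_{ikl}a_{ijl}a_{ijk} for distinct i,j,k,l) into the group of A-module automorphisms of V. -/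
open Finsupp

/-- Ordered triples of pairwise distinct indices, indexing the generators `a_{ijk}`. -/
abbrev Triple (n : ℕ) := {v : Fin n × Fin n × Fin n // v.1 ≠ v.2.1 ∧ v.2.1 ≠ v.2.2 ∧ v.1 ≠ v.2.2}

/-- The free-group generator corresponding to `a_{ijk}`. -/
def genF {n : ℕ} (i j k : Fin n) (hij : i ≠ j) (hjk : j ≠ k) (hik : i ≠ k) :
    FreeGroup (Triple n) :=
  FreeGroup.of ⟨(i, j, k), hij, hjk, hik⟩

/-- The relators of the group `Ĝ³ₙ`:
(1) `a_{kji} a_{ijk}` (i.e. `a_{kji} = a_{ijk}⁻¹`);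
(2) commutators `a_{ijk} a_{pqr} a_{ijk}⁻¹ a_{pqr}⁻¹` when `|{i,j,k,p,q,r}| ≥ 5`;
(3) the tetrahedron relators. -/
inductive HatRel (n : ℕ) : FreeGroup (Triple n) → Prop
  | inv : ∀ (i j k : Fin n) (hij : i ≠ j) (hjk : j ≠ k) (hik : i ≠ k),
      HatRel n (genF k j i hjk.symm hij.symm hik.symm * genF i j k hij hjk hik)
  | comm : ∀ x y : Triple n,
      5 ≤ ({x.1.1, x.1.2.1, x.1.2.2, y.1.1, y.1.2.1, y.1.2.2} : Finset (Fin n)).card →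
      HatRel n (FreeGroup.of x * FreeGroup.of y * (FreeGroup.of y * FreeGroup.of x)⁻¹)
  | tetra : ∀ (i j k l : Fin n) (hij : i ≠ j) (hik : i ≠ k) (hil : i ≠ l)
      (hjk : j ≠ k) (hjl : j ≠ l) (hkl : k ≠ l),
      HatRel n (genF i j k hij hjk hik * genF i j l hij hjl hil * genF i k l hik hkl hil *
        genF j k l hjk hkl hjl *
        (genF j k l hjk hkl hjl * genF i k l hik hkl hil * genF i j l hij hjl hil *
          genF i j k hij hjk hik)⁻¹)

/-- The group `Ĝ³ₙ`, presented by the generators `a_{ijk}` and the three families of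
relations. -/
abbrev hatG (n : ℕ) := PresentedGroup (setOf (HatRel n))

/-- The generator `a_{ijk}` of `Ĝ³ₙ`. -/
def hatGen {n : ℕ} (i j k : Fin n) (hij : i ≠ j) (hjk : j ≠ k) (hik : i ≠ k) : hatG n :=
  PresentedGroup.of ⟨(i, j, k), hij, hjk, hik⟩



set_option maxHeartbeats 2000000
set_option linter.unreachableTactic false
set_option linter.unusedTactic false

namespace Stmt3Aux

variable {n : ℕ}

lemma t_mul_tInv (i : Fin n) : t i * tInv i = 1 := by
  simp [t, tInv, AddMonoidAlgebra.single_mul_single, ← Finsupp.single_add,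
    AddMonoidAlgebra.one_def]

lemma tInv_mul_t (i : Fin n) : tInv i * t i = 1 := by
  rw [mul_comm]; exact t_mul_tInv i

lemma s_mul_sInv (j : Fin n) : s j * sInv j = 1 := by
  simp [s, sInv, AddMonoidAlgebra.single_mul_single, ← Finsupp.single_add,
    AddMonoidAlgebra.one_def]

lemma sInv_mul_s (j : Fin n) : sInv j * s j = 1 := by
  rw [mul_comm]; exact s_mul_sInv j

lemma rho_bas (i j k : Fin n) (hij : i ≠ j) (hjk : j ≠ k) (hik : i ≠ k)
    (a b : Fin n) (hab : a ≠ b) :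
    rho i j k hij hjk hik (bas a b hab) = rhoFun i j k hij hjk hik ⟨(a, b), hab⟩ := by
  simp [rho, bas]

lemma rho_ij (i j k : Fin n) (hij : i ≠ j) (hjk : j ≠ k) (hik : i ≠ k) (h : i ≠ j) :
    rho i j k hij hjk hik (bas i j h) =
      t i • bas i j hij + (1 - t i) • bas i k hik := by
  rw [rho_bas]; simp [rhoFun]

lemma rho_kj (i j k : Fin n) (hij : i ≠ j) (hjk : j ≠ k) (hik : i ≠ k) (h : k ≠ j) :
    rho i j k hij hjk hik (bas k j h) =
      tInv k • bas k j hjk.symm + (1 - tInv k) • bas k i hik.symm := by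
  rw [rho_bas]; simp [rhoFun, Ne.symm hik]

lemma rho_jk (i j k : Fin n) (hij : i ≠ j) (hjk : j ≠ k) (hik : i ≠ k) (h : j ≠ k) :
    rho i j k hij hjk hik (bas j k h) = s j • bas j k hjk := by
  rw [rho_bas]; simp [rhoFun, Ne.symm hij, hjk]

lemma rho_ji (i j k : Fin n) (hij : i ≠ j) (hjk : j ≠ k) (hik : i ≠ k) (h : j ≠ i) :
    rho i j k hij hjk hik (bas j i h) = sInv j • bas j i hij.symm := by
  rw [rho_bas]; simp [rhoFun, Ne.symm hij, hjk, hik]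

lemma rho_ne (i j k : Fin n) (hij : i ≠ j) (hjk : j ≠ k) (hik : i ≠ k)
    (a b : Fin n) (hab : a ≠ b)
    (h1 : ¬(a = i ∧ b = j)) (h2 : ¬(a = k ∧ b = j)) (h3 : ¬(a = j ∧ b = k))
    (h4 : ¬(a = j ∧ b = i)) :
    rho i j k hij hjk hik (bas a b hab) = bas a b hab := by
  rw [rho_bas]
  show rhoFun i j k hij hjk hik ⟨(a, b), hab⟩ = bas a b hab
  rw [rhoFun]
  simp only [Prod.mk.injEq]
  rw [if_neg h1, if_neg h2, if_neg h3, if_neg h4]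
  rfl

lemma ext_bas {f g : V n →ₗ[A n] V n}
    (h : ∀ a b (hab : a ≠ b), f (bas a b hab) = g (bas a b hab)) : f = g := by
  apply Finsupp.lhom_ext
  rintro ⟨⟨a, b⟩, hab⟩ c
  have e : (Finsupp.single (⟨(a, b), hab⟩ : Pair n) c : V n) = c • bas a b hab := by
    simp [bas, Finsupp.smul_single]
  rw [e, map_smul, map_smul, h]

lemma rho_rho_inv (i j k : Fin n) (hij : i ≠ j) (hjk : j ≠ k) (hik : i ≠ k)
    (a b : Fin n) (hab : a ≠ b) :
    rho i j k hij hjk hik (rho k j i hjk.symm hij.symm hik.symm (bas a b hab)) =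
      bas a b hab := by
  have s1 := Ne.symm hij
  have s2 := Ne.symm hjk
  have s3 := Ne.symm hik
  have s0 := Ne.symm hab
  by_cases h1 : a = i ∧ b = j
  · obtain ⟨rfl, rfl⟩ := h1
    simp [*, rho_ij, rho_kj, rho_jk, rho_ji, rho_ne, map_add, map_smul, smul_add, smul_smul]
    all_goals match_scalars
    all_goals first
      | ring1
      | linear_combination t_mul_tInv a | linear_combination (-1 : A n) * t_mul_tInv a
      | linear_combination tInv_mul_t a | linear_combination (-1 : A n) * tInv_mul_t a
      | linear_combination s_mul_sInv a | linear_combination (-1 : A n) * s_mul_sInv a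
      | linear_combination sInv_mul_s a | linear_combination (-1 : A n) * sInv_mul_s a
  · by_cases h2 : a = k ∧ b = j
    · obtain ⟨rfl, rfl⟩ := h2
      simp [*, rho_ij, rho_kj, rho_jk, rho_ji, rho_ne, map_add, map_smul, smul_add, smul_smul]
      all_goals match_scalars
      all_goals first
        | ring1
        | linear_combination t_mul_tInv a | linear_combination (-1 : A n) * t_mul_tInv a
        | linear_combination tInv_mul_t a | linear_combination (-1 : A n) * tInv_mul_t a
        | linear_combination s_mul_sInv a | linear_combination (-1 : A n) * s_mul_sInv a
        | linear_combination sInv_mul_s a | linear_combination (-1 : A n) * sInv_mul_s a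
    · by_cases h3 : a = j ∧ b = k
      · obtain ⟨rfl, rfl⟩ := h3
        simp [*, rho_ij, rho_kj, rho_jk, rho_ji, rho_ne, map_add, map_smul, smul_add, smul_smul]
        all_goals match_scalars
        all_goals first
          | ring1
          | linear_combination t_mul_tInv a | linear_combination (-1 : A n) * t_mul_tInv a
          | linear_combination tInv_mul_t a | linear_combination (-1 : A n) * tInv_mul_t a
          | linear_combination s_mul_sInv a | linear_combination (-1 : A n) * s_mul_sInv a
          | linear_combination sInv_mul_s a | linear_combination (-1 : A n) * sInv_mul_s a
      · by_cases h4 : a = j ∧ b = i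
        · obtain ⟨rfl, rfl⟩ := h4
          simp [*, rho_ij, rho_kj, rho_jk, rho_ji, rho_ne, map_add, map_smul, smul_add, smul_smul]
          all_goals match_scalars
          all_goals first
            | ring1
            | linear_combination t_mul_tInv a | linear_combination (-1 : A n) * t_mul_tInv a
            | linear_combination tInv_mul_t a | linear_combination (-1 : A n) * tInv_mul_t a
            | linear_combination s_mul_sInv a | linear_combination (-1 : A n) * s_mul_sInv a
            | linear_combination sInv_mul_s a | linear_combination (-1 : A n) * sInv_mul_s a
        · rw [rho_ne k j i hjk.symm hij.symm hik.symm a b hab h2 h1 h4 h3,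
            rho_ne i j k hij hjk hik a b hab h1 h2 h3 h4]

lemma comm_basis (i j k p q r : Fin n) (hij : i ≠ j) (hjk : j ≠ k) (hik : i ≠ k)
    (hpq : p ≠ q) (hqr : q ≠ r) (hpr : p ≠ r)
    (hM : ∀ c d : Fin n, (c = i ∨ c = j ∨ c = k) → (c = p ∨ c = q ∨ c = r) →
      (d = i ∨ d = j ∨ d = k) → (d = p ∨ d = q ∨ d = r) → c = d)
    (a b : Fin n) (hab : a ≠ b) :
    rho i j k hij hjk hik (rho p q r hpq hqr hpr (bas a b hab)) =
      rho p q r hpq hqr hpr (rho i j k hij hjk hik (bas a b hab)) := by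
  have nofixY : ∀ c d (hcd : c ≠ d), (c = i ∨ c = j ∨ c = k) → (d = i ∨ d = j ∨ d = k) →
      rho p q r hpq hqr hpr (bas c d hcd) = bas c d hcd := by
    intro c d hcd hc hd
    refine rho_ne p q r hpq hqr hpr c d hcd ?_ ?_ ?_ ?_ <;> rintro ⟨rfl, rfl⟩ <;>
      exact hcd (hM c d hc (by tauto) hd (by tauto))
  have nofixX : ∀ c d (hcd : c ≠ d), (c = p ∨ c = q ∨ c = r) → (d = p ∨ d = q ∨ d = r) →
      rho i j k hij hjk hik (bas c d hcd) = bas c d hcd := by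
    intro c d hcd hc hd
    refine rho_ne i j k hij hjk hik c d hcd ?_ ?_ ?_ ?_ <;> rintro ⟨rfl, rfl⟩ <;>
      exact hcd (hM c d (by tauto) hc (by tauto) hd)
  clear hM
  by_cases hx : (a = i ∨ a = j ∨ a = k) ∧ (b = i ∨ b = j ∨ b = k)
  · by_cases e1 : a = i ∧ b = j
    · obtain ⟨rfl, rfl⟩ := e1
      simp [*, rho_ij, rho_kj, rho_jk, rho_ji, rho_ne, map_add, map_smul, smul_add, smul_smul]
      all_goals match_scalars <;> ring1
    by_cases e2 : a = k ∧ b = j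
    · obtain ⟨rfl, rfl⟩ := e2
      simp [*, rho_ij, rho_kj, rho_jk, rho_ji, rho_ne, map_add, map_smul, smul_add, smul_smul]
      all_goals match_scalars <;> ring1
    by_cases e3 : a = j ∧ b = k
    · obtain ⟨rfl, rfl⟩ := e3
      simp [*, rho_ij, rho_kj, rho_jk, rho_ji, rho_ne, map_add, map_smul, smul_add, smul_smul]
      all_goals match_scalars <;> ring1
    by_cases e4 : a = j ∧ b = i
    · obtain ⟨rfl, rfl⟩ := e4
      simp [*, rho_ij, rho_kj, rho_jk, rho_ji, rho_ne, map_add, map_smul, smul_add, smul_smul]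
      all_goals match_scalars <;> ring1
    simp [*, rho_ij, rho_kj, rho_jk, rho_ji, rho_ne, map_add, map_smul, smul_add, smul_smul]
    all_goals match_scalars <;> ring1
  · by_cases hy : (a = p ∨ a = q ∨ a = r) ∧ (b = p ∨ b = q ∨ b = r)
    · by_cases f1 : a = p ∧ b = q
      · obtain ⟨rfl, rfl⟩ := f1
        simp [*, rho_ij, rho_kj, rho_jk, rho_ji, rho_ne, map_add, map_smul, smul_add, smul_smul]
        all_goals match_scalars <;> ring1
      by_cases f2 : a = r ∧ b = q
      · obtain ⟨rfl, rfl⟩ := f2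
        simp [*, rho_ij, rho_kj, rho_jk, rho_ji, rho_ne, map_add, map_smul, smul_add, smul_smul]
        all_goals match_scalars <;> ring1
      by_cases f3 : a = q ∧ b = r
      · obtain ⟨rfl, rfl⟩ := f3
        simp [*, rho_ij, rho_kj, rho_jk, rho_ji, rho_ne, map_add, map_smul, smul_add, smul_smul]
        all_goals match_scalars <;> ring1
      by_cases f4 : a = q ∧ b = p
      · obtain ⟨rfl, rfl⟩ := f4
        simp [*, rho_ij, rho_kj, rho_jk, rho_ji, rho_ne, map_add, map_smul, smul_add, smul_smul]
        all_goals match_scalars <;> ring1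
      simp [*, rho_ij, rho_kj, rho_jk, rho_ji, rho_ne, map_add, map_smul, smul_add, smul_smul]
      all_goals match_scalars <;> ring1
    · rcases not_and_or.mp hx with h | h <;> rcases not_and_or.mp hy with h' | h'
      all_goals push_neg at h h'
      all_goals obtain ⟨u1, u2, u3⟩ := h
      all_goals obtain ⟨w1, w2, w3⟩ := h'
      all_goals simp [*, rho_ij, rho_kj, rho_jk, rho_ji, rho_ne, map_add, map_smul, smul_add, smul_smul]

lemma tetra_basis (i j k l : Fin n) (hij : i ≠ j) (hik : i ≠ k) (hil : i ≠ l)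
    (hjk : j ≠ k) (hjl : j ≠ l) (hkl : k ≠ l) (a b : Fin n) (hab : a ≠ b) :
    rho i j k hij hjk hik (rho i j l hij hjl hil (rho i k l hik hkl hil
      (rho j k l hjk hkl hjl (bas a b hab)))) =
    rho j k l hjk hkl hjl (rho i k l hik hkl hil (rho i j l hij hjl hil
      (rho i j k hij hjk hik (bas a b hab)))) := by
  have s1 := Ne.symm hij
  have s2 := Ne.symm hik
  have s3 := Ne.symm hil
  have s4 := Ne.symm hjk
  have s5 := Ne.symm hjl
  have s6 := Ne.symm hkl
  have s0 := Ne.symm hab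
  rcases eq_or_ne a i with rfl | hai
  · rcases eq_or_ne b j with rfl | hbj
    · simp [*, rho_ij, rho_kj, rho_jk, rho_ji, rho_ne, map_add, map_smul, smul_add, smul_smul]
      all_goals match_scalars <;> ring1
    rcases eq_or_ne b k with rfl | hbk
    · simp [*, rho_ij, rho_kj, rho_jk, rho_ji, rho_ne, map_add, map_smul, smul_add, smul_smul]
      all_goals match_scalars <;> ring1
    rcases eq_or_ne b l with rfl | hbl
    · simp [*, rho_ij, rho_kj, rho_jk, rho_ji, rho_ne, map_add, map_smul, smul_add, smul_smul]
      all_goals match_scalars <;> ring1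
    simp [*, rho_ij, rho_kj, rho_jk, rho_ji, rho_ne, map_add, map_smul, smul_add, smul_smul]
    all_goals match_scalars <;> ring1
  rcases eq_or_ne a j with rfl | haj
  · rcases eq_or_ne b i with rfl | hbi
    · simp [*, rho_ij, rho_kj, rho_jk, rho_ji, rho_ne, map_add, map_smul, smul_add, smul_smul]
      all_goals match_scalars <;> ring1
    rcases eq_or_ne b k with rfl | hbk
    · simp [*, rho_ij, rho_kj, rho_jk, rho_ji, rho_ne, map_add, map_smul, smul_add, smul_smul]
      all_goals match_scalars <;> ring1
    rcases eq_or_ne b l with rfl | hbl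
    · simp [*, rho_ij, rho_kj, rho_jk, rho_ji, rho_ne, map_add, map_smul, smul_add, smul_smul]
      all_goals match_scalars <;> ring1
    simp [*, rho_ij, rho_kj, rho_jk, rho_ji, rho_ne, map_add, map_smul, smul_add, smul_smul]
    all_goals match_scalars <;> ring1
  rcases eq_or_ne a k with rfl | hak
  · rcases eq_or_ne b i with rfl | hbi
    · simp [*, rho_ij, rho_kj, rho_jk, rho_ji, rho_ne, map_add, map_smul, smul_add, smul_smul]
      all_goals match_scalars <;> ring1
    rcases eq_or_ne b j with rfl | hbj
    · simp [*, rho_ij, rho_kj, rho_jk, rho_ji, rho_ne, map_add, map_smul, smul_add, smul_smul]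
      all_goals match_scalars <;> ring1
    rcases eq_or_ne b l with rfl | hbl
    · simp [*, rho_ij, rho_kj, rho_jk, rho_ji, rho_ne, map_add, map_smul, smul_add, smul_smul]
      all_goals match_scalars <;> ring1
    simp [*, rho_ij, rho_kj, rho_jk, rho_ji, rho_ne, map_add, map_smul, smul_add, smul_smul]
    all_goals match_scalars <;> ring1
  rcases eq_or_ne a l with rfl | hal
  · rcases eq_or_ne b i with rfl | hbi
    · simp [*, rho_ij, rho_kj, rho_jk, rho_ji, rho_ne, map_add, map_smul, smul_add, smul_smul]
      all_goals match_scalars <;> ring1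
    rcases eq_or_ne b j with rfl | hbj
    · simp [*, rho_ij, rho_kj, rho_jk, rho_ji, rho_ne, map_add, map_smul, smul_add, smul_smul]
      all_goals match_scalars <;> ring1
    rcases eq_or_ne b k with rfl | hbk
    · simp [*, rho_ij, rho_kj, rho_jk, rho_ji, rho_ne, map_add, map_smul, smul_add, smul_smul]
      all_goals match_scalars <;> ring1
    simp [*, rho_ij, rho_kj, rho_jk, rho_ji, rho_ne, map_add, map_smul, smul_add, smul_smul]
    all_goals match_scalars <;> ring1
  simp [*, rho_ij, rho_kj, rho_jk, rho_ji, rho_ne, map_add, map_smul, smul_add, smul_smul]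
  all_goals match_scalars <;> ring1

noncomputable def autE (i j k : Fin n) (hij : i ≠ j) (hjk : j ≠ k) (hik : i ≠ k) :
    V n ≃ₗ[A n] V n :=
  LinearEquiv.ofLinear (rho i j k hij hjk hik) (rho k j i hjk.symm hij.symm hik.symm)
    (ext_bas fun a b hab => by
      simpa using rho_rho_inv i j k hij hjk hik a b hab)
    (ext_bas fun a b hab => by
      simpa using rho_rho_inv k j i hjk.symm hij.symm hik.symm a b hab)

noncomputable def F : Triple n → (V n ≃ₗ[A n] V n) := fun x =>
  autE x.1.1 x.1.2.1 x.1.2.2 x.2.1 x.2.2.1 x.2.2.2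

lemma F_coe (x : Triple n) :
    (F x : V n →ₗ[A n] V n) = rho x.1.1 x.1.2.1 x.1.2.2 x.2.1 x.2.2.1 x.2.2.2 := rfl

end Stmt3Aux

set_option maxHeartbeats 2000000 in
/-- The assignment `a_{ijk} ↦ ρ_{ijk}` extends to a group homomorphism from `Ĝ³ₙ` to the
group of `A`-module automorphisms of `V`. -/
theorem stmt_3 (n : ℕ) :
    ∃ Φ : hatG n →* (V n ≃ₗ[A n] V n),
      ∀ (i j k : Fin n) (hij : i ≠ j) (hjk : j ≠ k) (hik : i ≠ k) (v : V n),
        Φ (hatGen i j k hij hjk hik) v = rho i j k hij hjk hik v := by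

  have hrels : ∀ r ∈ setOf (HatRel n), FreeGroup.lift (Stmt3Aux.F (n := n)) r = 1 := by
    intro r hr
    change HatRel n r at hr
    induction hr with
    | inv i j k hij hjk hik =>
      simp only [genF, map_mul, FreeGroup.lift_apply_of]
      apply LinearEquiv.toLinearMap_injective
      simp only [LinearEquiv.coe_toLinearMap_mul, LinearEquiv.coe_toLinearMap_one,
        Stmt3Aux.F_coe]
      refine Stmt3Aux.ext_bas fun a b hab => ?_
      simp only [Module.End.mul_apply, LinearMap.id_apply]
      exact Stmt3Aux.rho_rho_inv k j i hjk.symm hij.symm hik.symm a b hab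
    | comm x y hcard =>
      obtain ⟨⟨i, j, k⟩, hij, hjk, hik⟩ := x
      obtain ⟨⟨p, q, r⟩, hpq, hqr, hpr⟩ := y
      have hU : ({i, j, k, p, q, r} : Finset (Fin n)) =
          ({i, j, k} : Finset (Fin n)) ∪ ({p, q, r} : Finset (Fin n)) := by
        ext z
        simp only [Finset.mem_insert, Finset.mem_singleton, Finset.mem_union, or_assoc]
      have hX3 : ({i, j, k} : Finset (Fin n)).card ≤ 3 :=
        (Finset.card_insert_le _ _).trans (Nat.succ_le_succ
          ((Finset.card_insert_le _ _).trans (Nat.succ_le_succ (by simp))))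
      have hY3 : ({p, q, r} : Finset (Fin n)).card ≤ 3 :=
        (Finset.card_insert_le _ _).trans (Nat.succ_le_succ
          ((Finset.card_insert_le _ _).trans (Nat.succ_le_succ (by simp))))
      have hcap := Finset.card_union_add_card_inter ({i, j, k} : Finset (Fin n))
        ({p, q, r} : Finset (Fin n))
      have hcard2 : 5 ≤ ({i, j, k, p, q, r} : Finset (Fin n)).card := hcard
      rw [hU] at hcard2
      have hM : ∀ c d : Fin n, (c = i ∨ c = j ∨ c = k) → (c = p ∨ c = q ∨ c = r) →
          (d = i ∨ d = j ∨ d = k) → (d = p ∨ d = q ∨ d = r) → c = d := by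
        intro c d hc1 hc2 hd1 hd2
        by_contra hcd
        have hc : c ∈ ({i, j, k} : Finset (Fin n)) ∩ ({p, q, r} : Finset (Fin n)) :=
          Finset.mem_inter.mpr
            ⟨by simp only [Finset.mem_insert, Finset.mem_singleton]; exact hc1,
             by simp only [Finset.mem_insert, Finset.mem_singleton]; exact hc2⟩
        have hd : d ∈ ({i, j, k} : Finset (Fin n)) ∩ ({p, q, r} : Finset (Fin n)) :=
          Finset.mem_inter.mpr
            ⟨by simp only [Finset.mem_insert, Finset.mem_singleton]; exact hd1,
             by simp only [Finset.mem_insert, Finset.mem_singleton]; exact hd2⟩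
        have h2 : 1 < (({i, j, k} : Finset (Fin n)) ∩ ({p, q, r} : Finset (Fin n))).card :=
          Finset.one_lt_card.mpr ⟨c, hc, d, hd, hcd⟩
        omega
      simp only [map_mul, map_inv, FreeGroup.lift_apply_of]
      rw [mul_inv_eq_one]
      apply LinearEquiv.toLinearMap_injective
      simp only [LinearEquiv.coe_toLinearMap_mul, Stmt3Aux.F_coe]
      refine Stmt3Aux.ext_bas fun a b hab => ?_
      simp only [Module.End.mul_apply]
      exact Stmt3Aux.comm_basis i j k p q r hij hjk hik hpq hqr hpr hM a b hab
    | tetra i j k l hij hik hil hjk hjl hkl =>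
      simp only [genF, map_mul, map_inv, FreeGroup.lift_apply_of]
      rw [mul_inv_eq_one]
      apply LinearEquiv.toLinearMap_injective
      simp only [LinearEquiv.coe_toLinearMap_mul, Stmt3Aux.F_coe]
      refine Stmt3Aux.ext_bas fun a b hab => ?_
      simp only [Module.End.mul_apply]
      exact Stmt3Aux.tetra_basis i j k l hij hik hil hjk hjl hkl a b hab
  refine ⟨PresentedGroup.toGroup hrels, fun i j k hij hjk hik v => ?_⟩
  have h1 : PresentedGroup.toGroup hrels (hatGen i j k hij hjk hik) =
      Stmt3Aux.F ⟨(i, j, k), hij, hjk, hik⟩ := PresentedGroup.toGroup.of hrels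
  rw [h1]
  rfl
end

section
/- Define ψ_i = a_{i-1,i+1,i} a_{i-2,i+1,i} ⋯ a_{1,i+1,i} · a_{n,i+1,i} ⋯ a_{i+2,i+1,i} ∈ Ĝ³_n and φ(σ_i) = ((i, i+1), ψ_i) ∈ Σ_n ⋉ Ĝ³_n for i = 1,...,n−1. Then for |i − j| > 1, the far commutativity relation φ(σ_i)·φ(σ_j) = φ(σ_j)·φ(σ_i) holds in Σ_n ⋉ Ĝ³_n. -/
/-- The underlying set `Σₙ × G` of the semidirect product `Σₙ ⋉ G`. -/
structure SD (n : ℕ) (G : Type*) where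
  /-- the permutation component -/
  perm : Equiv.Perm (Fin n)
  /-- the `G` component -/
  elt : G

/-- The generator `a_{pqr}` of `Ĝ³ₘ` with 1-based natural-number indices
(junk value `1` if the indices are invalid). -/
def aN {m : ℕ} (p q r : ℕ) : hatG m :=
  if h : 1 ≤ p ∧ 1 ≤ q ∧ 1 ≤ r ∧ p ≤ m ∧ q ≤ m ∧ r ≤ m ∧ p ≠ q ∧ q ≠ r ∧ p ≠ r then
    hatGen ⟨p - 1, by omega⟩ ⟨q - 1, by omega⟩ ⟨r - 1, by omega⟩
      (by simp only [ne_eq, Fin.mk.injEq]; omega)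
      (by simp only [ne_eq, Fin.mk.injEq]; omega)
      (by simp only [ne_eq, Fin.mk.injEq]; omega)
  else 1

/-- `ψᵢ = a_{i-1,i+1,i} ⋯ a_{1,i+1,i} · a_{m,i+1,i} ⋯ a_{i+2,i+1,i} ∈ Ĝ³ₘ` (1-based
indices, `m` strands). -/
def psi (m i : ℕ) : hatG m :=
  (((List.range' 1 (i - 1)).reverse ++ (List.range' (i + 2) (m - i - 1)).reverse).map
    fun r => (aN r (i + 1) i : hatG m)).prod

/-- The transposition `(i, i+1)` in `Σₘ`, 1-based (junk value `1` if out of range). -/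
def sigmaPerm (m i : ℕ) : Equiv.Perm (Fin m) :=
  if h : 1 ≤ i ∧ i < m then Equiv.swap ⟨i - 1, by omega⟩ ⟨i, h.2⟩ else 1

/-- `φ(σᵢ) = ((i, i+1), ψᵢ) ∈ Σₘ ⋉ Ĝ³ₘ`. -/
def phiSigma (m i : ℕ) : SD m (hatG m) := ⟨sigmaPerm m i, psi m i⟩

/-- The product in `Σₘ ⋉ Ĝ³ₘ`: `(σ₁,ω₁)·(σ₂,ω₂) = (σ₁σ₂, σ₂(ω₁)ω₂)`. -/
def SDmul {m : ℕ} (act : Equiv.Perm (Fin m) →* MulAut (hatG m))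
    (p q : SD m (hatG m)) : SD m (hatG m) :=
  ⟨p.perm * q.perm, act q.perm p.elt * q.elt⟩

/-! ### Auxiliary lemmas -/

lemma hatRel_one {n : ℕ} {r : FreeGroup (Triple n)} (h : HatRel n r) :
    PresentedGroup.mk (setOf (HatRel n)) r = (1 : hatG n) :=
  (QuotientGroup.eq_one_iff r).mpr (Subgroup.subset_normalClosure h)

lemma hatGen_inv {n : ℕ} (i j k : Fin n) (hij : i ≠ j) (hjk : j ≠ k) (hik : i ≠ k) :
    hatGen k j i hjk.symm hij.symm hik.symm = (hatGen i j k hij hjk hik)⁻¹ := by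
  have h := hatRel_one (HatRel.inv i j k hij hjk hik)
  rw [map_mul] at h
  exact eq_inv_of_mul_eq_one_left h

lemma hatGen_comm {n : ℕ} {i j k p q r : Fin n} {hij : i ≠ j} {hjk : j ≠ k} {hik : i ≠ k}
    {hpq : p ≠ q} {hqr : q ≠ r} {hpr : p ≠ r}
    (hcard : 5 ≤ ({i, j, k, p, q, r} : Finset (Fin n)).card) :
    Commute (hatGen i j k hij hjk hik) (hatGen p q r hpq hqr hpr) := by
  have h := hatRel_one (HatRel.comm ⟨(i, j, k), hij, hjk, hik⟩ ⟨(p, q, r), hpq, hqr, hpr⟩ hcard)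
  simp only [map_mul, map_inv] at h
  exact mul_inv_eq_one.mp h

lemma hatGen_tetra {n : ℕ} (i j k l : Fin n) (hij : i ≠ j) (hik : i ≠ k) (hil : i ≠ l)
    (hjk : j ≠ k) (hjl : j ≠ l) (hkl : k ≠ l) :
    hatGen i j k hij hjk hik * hatGen i j l hij hjl hil * hatGen i k l hik hkl hil *
      hatGen j k l hjk hkl hjl =
    hatGen j k l hjk hkl hjl * hatGen i k l hik hkl hil * hatGen i j l hij hjl hil *
      hatGen i j k hij hjk hik := by
  have h := hatRel_one (HatRel.tetra i j k l hij hik hil hjk hjl hkl)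
  simp only [map_mul, map_inv] at h
  exact mul_inv_eq_one.mp h

lemma hatGen_congr {n : ℕ} {i j k i' j' k' : Fin n} (h1 : i = i') (h2 : j = j') (h3 : k = k')
    {hij : i ≠ j} {hjk : j ≠ k} {hik : i ≠ k} {hij' : i' ≠ j'} {hjk' : j' ≠ k'} {hik' : i' ≠ k'} :
    hatGen i j k hij hjk hik = hatGen i' j' k' hij' hjk' hik' := by
  subst h1; subst h2; subst h3; rfl

lemma card_ge_five {α : Type*} [DecidableEq α] {a b c d e : α} {S : Finset α}
    (hsub : ({a, b, c, d, e} : Finset α) ⊆ S)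
    (h1 : a ≠ b) (h2 : a ≠ c) (h3 : a ≠ d) (h4 : a ≠ e) (h5 : b ≠ c) (h6 : b ≠ d)
    (h7 : b ≠ e) (h8 : c ≠ d) (h9 : c ≠ e) (h10 : d ≠ e) : 5 ≤ S.card := by
  have hcard : ({a, b, c, d, e} : Finset α).card = 5 := by
    rw [Finset.card_insert_of_notMem (by simp [h1, h2, h3, h4]),
        Finset.card_insert_of_notMem (by simp [h5, h6, h7]),
        Finset.card_insert_of_notMem (by simp [h8, h9]),
        Finset.card_insert_of_notMem (by simp [h10]), Finset.card_singleton]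
  exact hcard ▸ Finset.card_le_card hsub

lemma aN_eq {m : ℕ} {p q r : ℕ} (h1 : 1 ≤ p) (h2 : 1 ≤ q) (h3 : 1 ≤ r) (h4 : p ≤ m)
    (h5 : q ≤ m) (h6 : r ≤ m) (h7 : p ≠ q) (h8 : q ≠ r) (h9 : p ≠ r) :
    (aN p q r : hatG m) = hatGen ⟨p - 1, by omega⟩ ⟨q - 1, by omega⟩ ⟨r - 1, by omega⟩
      (by simp only [ne_eq, Fin.mk.injEq]; omega)
      (by simp only [ne_eq, Fin.mk.injEq]; omega)
      (by simp only [ne_eq, Fin.mk.injEq]; omega) := by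
  rw [aN, dif_pos ⟨h1, h2, h3, h4, h5, h6, h7, h8, h9⟩]

lemma core_trick {G : Type*} [Group G] (A B C D : G)
    (t : B⁻¹ * A⁻¹ * D * C = C * D * A⁻¹ * B⁻¹) : A * B * C * D = D * C * B * A := by
  have h2 := congrArg (fun x => A * B * x * B * A) t
  simp only [mul_assoc, mul_inv_cancel_left, inv_mul_cancel_left, inv_mul_cancel,
    mul_one] at h2
  simpa [mul_assoc] using h2.symm

lemma core_identity {n : ℕ} {a b c d : Fin n} (hab : a ≠ b) (hac : a ≠ c) (had : a ≠ d)
    (hbc : b ≠ c) (hbd : b ≠ d) (hcd : c ≠ d) :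
    hatGen c b a hbc.symm hab.symm hac.symm * hatGen d b a hbd.symm hab.symm had.symm *
      hatGen b d c hbd hcd.symm hbc * hatGen a d c had hcd.symm hac =
    hatGen a d c had hcd.symm hac * hatGen b d c hbd hcd.symm hbc *
      hatGen d b a hbd.symm hab.symm had.symm * hatGen c b a hbc.symm hab.symm hac.symm := by
  apply core_trick
  have t := hatGen_tetra a b d c hab had hac hbd hbc hcd.symm
  rw [hatGen_inv d b a hbd.symm hab.symm had.symm,
      hatGen_inv c b a hbc.symm hab.symm hac.symm] at t
  exact t

private lemma swap3 {G : Type*} [Group G] {a b : G} (h : Commute a b) (c : G) :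
    a * (b * c) = b * (a * c) := by rw [← mul_assoc, h.eq, mul_assoc]

lemma shuffle {G : Type*} [Group G] (P Q R S A B C D : G)
    (hQR : Commute Q R) (hQC : Commute Q C) (hQD : Commute Q D) (hQS : Commute Q S)
    (hPR : Commute P R) (hPC : Commute P C) (hPD : Commute P D) (hPS : Commute P S)
    (hRA : Commute R A) (hRB : Commute R B) (hSA : Commute S A) (hSB : Commute S B)
    (hcore : A * B * C * D = D * C * B * A) :
    P * (A * B) * Q * (R * (C * D) * S) = R * (D * C) * S * (P * (B * A) * Q) := by
  have core' : ∀ X : G, A * (B * (C * (D * X))) = D * (C * (B * (A * X))) := by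
    intro X
    have h2 : A * B * C * D * X = D * C * B * A * X := by rw [hcore]
    simpa [mul_assoc] using h2
  simp only [mul_assoc]
  rw [swap3 hQR, swap3 hQC, swap3 hQD, swap3 hRB.symm, swap3 hRA.symm, swap3 hPR,
      core', swap3 hPS.symm, swap3 hSB, swap3 hSA, hQS.symm.eq, swap3 hPC.symm,
      swap3 hPD.symm]

set_option maxHeartbeats 2000000 in
lemma key (m : ℕ) (act : Equiv.Perm (Fin m) →* MulAut (hatG m))
    (hact : ∀ (τ : Equiv.Perm (Fin m)) (i j k : Fin m)
        (hij : i ≠ j) (hjk : j ≠ k) (hik : i ≠ k),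
      act τ (hatGen i j k hij hjk hik) =
        hatGen (τ i) (τ j) (τ k) (fun h => hij (τ.injective h))
          (fun h => hjk (τ.injective h)) (fun h => hik (τ.injective h)))
    (i j : ℕ) (hi : 1 ≤ i) (hi' : i < m) (hj : 1 ≤ j) (hj' : j < m)
    (hij : i + 1 < j) :
    SDmul act (phiSigma m i) (phiSigma m j) = SDmul act (phiSigma m j) (phiSigma m i) := by
  have hσi : sigmaPerm m i = Equiv.swap ⟨i - 1, by omega⟩ ⟨i, hi'⟩ := by
    unfold sigmaPerm; rw [dif_pos ⟨hi, hi'⟩]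
  have hσj : sigmaPerm m j = Equiv.swap ⟨j - 1, by omega⟩ ⟨j, hj'⟩ := by
    unfold sigmaPerm; rw [dif_pos ⟨hj, hj'⟩]
  -- the permutation components commute
  have hperm : sigmaPerm m i * sigmaPerm m j = sigmaPerm m j * sigmaPerm m i := by
    rw [hσi, hσj]
    apply Equiv.Perm.Disjoint.commute
    intro x
    by_cases hx : x = (⟨i - 1, by omega⟩ : Fin m) ∨ x = (⟨i, hi'⟩ : Fin m)
    · right
      rcases hx with h | h <;> subst h <;>
        exact Equiv.swap_apply_of_ne_of_ne
          (by simp only [ne_eq, Fin.mk.injEq]; omega)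
          (by simp only [ne_eq, Fin.mk.injEq]; omega)
    · left
      push_neg at hx
      exact Equiv.swap_apply_of_ne_of_ne hx.1 hx.2
  -- the two sublists
  obtain ⟨LP, hLP⟩ : ∃ L : List ℕ,
      L = (List.range' 1 (i - 1)).reverse ++ (List.range' (j + 2) (m - j - 1)).reverse :=
    ⟨_, rfl⟩
  obtain ⟨LQ, hLQ⟩ : ∃ L : List ℕ, L = (List.range' (i + 2) (j - i - 2)).reverse := ⟨_, rfl⟩
  have hsplitI : (List.range' 1 (i - 1)).reverse ++ (List.range' (i + 2) (m - i - 1)).reverse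
      = LP ++ ([j + 1, j] ++ LQ) := by
    have e2 : j - i - 2 + (m - j + 1) = m - i - 1 := by omega
    have h1 : List.range' (i + 2) (m - i - 1)
        = List.range' (i + 2) (j - i - 2) ++ (List.range' j 2 ++ List.range' (j + 2) (m - j - 1)) := by
      rw [List.range'_append_1 (s := j) (m := 2) (n := m - j - 1), show 2 + (m - j - 1) = m - j + 1 by omega,
        ← e2, ← List.range'_append_1 (s := i + 2) (m := j - i - 2) (n := m - j + 1),
        show i + 2 + (j - i - 2) = j by omega]
    rw [h1, hLP, hLQ, show List.range' j 2 = [j, j + 1] from rfl]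
    simp [List.reverse_append, List.append_assoc]
  have hsplitJ : (List.range' 1 (j - 1)).reverse ++ (List.range' (j + 2) (m - j - 1)).reverse
      = LQ ++ ([i + 1, i] ++ LP) := by
    have e2 : i - 1 + (j - i) = j - 1 := by omega
    have h1 : List.range' 1 (j - 1)
        = List.range' 1 (i - 1) ++ (List.range' i 2 ++ List.range' (i + 2) (j - i - 2)) := by
      rw [List.range'_append_1 (s := i) (m := 2) (n := j - i - 2), show 2 + (j - i - 2) = j - i by omega,
        ← e2, ← List.range'_append_1 (s := 1) (m := i - 1) (n := j - i), show 1 + (i - 1) = i by omega]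
    rw [h1, hLP, hLQ, show List.range' i 2 = [i, i + 1] from rfl]
    simp [List.reverse_append, List.append_assoc]
  -- product decompositions of ψᵢ and ψⱼ
  have hpsiI : psi m i =
      (LP.map fun r => (aN r (i + 1) i : hatG m)).prod *
        ((aN (j + 1) (i + 1) i : hatG m) * (aN j (i + 1) i : hatG m)) *
        (LQ.map fun r => (aN r (i + 1) i : hatG m)).prod := by
    unfold psi
    rw [hsplitI]
    simp [List.prod_append, mul_assoc]
  have hpsiJ : psi m j =
      (LQ.map fun s => (aN s (j + 1) j : hatG m)).prod *
        ((aN (i + 1) (j + 1) j : hatG m) * (aN i (j + 1) j : hatG m)) *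
        (LP.map fun s => (aN s (j + 1) j : hatG m)).prod := by
    unfold psi
    rw [hsplitJ]
    simp [List.prod_append, mul_assoc]
  -- membership facts
  have hmemLP : ∀ r ∈ LP, 1 ≤ r ∧ r ≤ m ∧ r ≠ i ∧ r ≠ i + 1 ∧ r ≠ j ∧ r ≠ j + 1 := by
    intro r hr
    rw [hLP] at hr
    simp only [List.mem_append, List.mem_reverse, List.mem_range'_1] at hr
    omega
  have hmemLQ : ∀ r ∈ LQ, 1 ≤ r ∧ r ≤ m ∧ r ≠ i ∧ r ≠ i + 1 ∧ r ≠ j ∧ r ≠ j + 1 := by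
    intro r hr
    rw [hLQ] at hr
    simp only [List.mem_reverse, List.mem_range'_1] at hr
    omega
  -- action of σⱼ on the factors of ψᵢ
  have hfixI : ∀ r, 1 ≤ r → r ≤ m → r ≠ i → r ≠ i + 1 → r ≠ j → r ≠ j + 1 →
      act (sigmaPerm m j) (aN r (i + 1) i : hatG m) = aN r (i + 1) i := by
    intro r h1 h2 h3 h4 h5 h6
    rw [aN_eq h1 (by omega) hi h2 (by omega) (by omega) h4 (by omega) h3, hσj, hact]
    exact hatGen_congr
      (Equiv.swap_apply_of_ne_of_ne (by simp only [ne_eq, Fin.mk.injEq]; omega)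
        (by simp only [ne_eq, Fin.mk.injEq]; omega))
      (Equiv.swap_apply_of_ne_of_ne (by simp only [ne_eq, Fin.mk.injEq]; omega)
        (by simp only [ne_eq, Fin.mk.injEq]; omega))
      (Equiv.swap_apply_of_ne_of_ne (by simp only [ne_eq, Fin.mk.injEq]; omega)
        (by simp only [ne_eq, Fin.mk.injEq]; omega))
  have hfixJ : ∀ s, 1 ≤ s → s ≤ m → s ≠ i → s ≠ i + 1 → s ≠ j → s ≠ j + 1 →
      act (sigmaPerm m i) (aN s (j + 1) j : hatG m) = aN s (j + 1) j := by
    intro s h1 h2 h3 h4 h5 h6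
    rw [aN_eq h1 (by omega) hj h2 (by omega) (by omega) h6 (by omega) h5, hσi, hact]
    exact hatGen_congr
      (Equiv.swap_apply_of_ne_of_ne (by simp only [ne_eq, Fin.mk.injEq]; omega)
        (by simp only [ne_eq, Fin.mk.injEq]; omega))
      (Equiv.swap_apply_of_ne_of_ne (by simp only [ne_eq, Fin.mk.injEq]; omega)
        (by simp only [ne_eq, Fin.mk.injEq]; omega))
      (Equiv.swap_apply_of_ne_of_ne (by simp only [ne_eq, Fin.mk.injEq]; omega)
        (by simp only [ne_eq, Fin.mk.injEq]; omega))
  have hswapI1 : act (sigmaPerm m j) (aN (j + 1) (i + 1) i : hatG m) = aN j (i + 1) i := by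
    rw [aN_eq (by omega) (by omega) hi (by omega) (by omega) (by omega) (by omega)
        (by omega) (by omega),
      aN_eq hj (by omega) hi (by omega) (by omega) (by omega) (by omega) (by omega) (by omega),
      hσj, hact]
    exact hatGen_congr (Equiv.swap_apply_right _ _)
      (Equiv.swap_apply_of_ne_of_ne (by simp only [ne_eq, Fin.mk.injEq]; omega)
        (by simp only [ne_eq, Fin.mk.injEq]; omega))
      (Equiv.swap_apply_of_ne_of_ne (by simp only [ne_eq, Fin.mk.injEq]; omega)
        (by simp only [ne_eq, Fin.mk.injEq]; omega))
  have hswapI2 : act (sigmaPerm m j) (aN j (i + 1) i : hatG m) = aN (j + 1) (i + 1) i := by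
    rw [aN_eq hj (by omega) hi (by omega) (by omega) (by omega) (by omega) (by omega) (by omega),
      aN_eq (by omega) (by omega) hi (by omega) (by omega) (by omega) (by omega)
        (by omega) (by omega),
      hσj, hact]
    exact hatGen_congr (Equiv.swap_apply_left _ _)
      (Equiv.swap_apply_of_ne_of_ne (by simp only [ne_eq, Fin.mk.injEq]; omega)
        (by simp only [ne_eq, Fin.mk.injEq]; omega))
      (Equiv.swap_apply_of_ne_of_ne (by simp only [ne_eq, Fin.mk.injEq]; omega)
        (by simp only [ne_eq, Fin.mk.injEq]; omega))
  have hswapJ1 : act (sigmaPerm m i) (aN (i + 1) (j + 1) j : hatG m) = aN i (j + 1) j := by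
    rw [aN_eq (by omega) (by omega) hj (by omega) (by omega) (by omega) (by omega)
        (by omega) (by omega),
      aN_eq hi (by omega) hj (by omega) (by omega) (by omega) (by omega) (by omega) (by omega),
      hσi, hact]
    exact hatGen_congr (Equiv.swap_apply_right _ _)
      (Equiv.swap_apply_of_ne_of_ne (by simp only [ne_eq, Fin.mk.injEq]; omega)
        (by simp only [ne_eq, Fin.mk.injEq]; omega))
      (Equiv.swap_apply_of_ne_of_ne (by simp only [ne_eq, Fin.mk.injEq]; omega)
        (by simp only [ne_eq, Fin.mk.injEq]; omega))
  have hswapJ2 : act (sigmaPerm m i) (aN i (j + 1) j : hatG m) = aN (i + 1) (j + 1) j := by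
    rw [aN_eq hi (by omega) hj (by omega) (by omega) (by omega) (by omega) (by omega) (by omega),
      aN_eq (by omega) (by omega) hj (by omega) (by omega) (by omega) (by omega)
        (by omega) (by omega),
      hσi, hact]
    exact hatGen_congr (Equiv.swap_apply_left _ _)
      (Equiv.swap_apply_of_ne_of_ne (by simp only [ne_eq, Fin.mk.injEq]; omega)
        (by simp only [ne_eq, Fin.mk.injEq]; omega))
      (Equiv.swap_apply_of_ne_of_ne (by simp only [ne_eq, Fin.mk.injEq]; omega)
        (by simp only [ne_eq, Fin.mk.injEq]; omega))
  -- action on the whole products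
  have hLPmapI : LP.map (⇑(act (sigmaPerm m j)) ∘ fun r => (aN r (i + 1) i : hatG m))
      = LP.map fun r => (aN r (i + 1) i : hatG m) :=
    List.map_congr_left fun r hr => by
      obtain ⟨h1, h2, h3, h4, h5, h6⟩ := hmemLP r hr
      exact hfixI r h1 h2 h3 h4 h5 h6
  have hLQmapI : LQ.map (⇑(act (sigmaPerm m j)) ∘ fun r => (aN r (i + 1) i : hatG m))
      = LQ.map fun r => (aN r (i + 1) i : hatG m) :=
    List.map_congr_left fun r hr => by
      obtain ⟨h1, h2, h3, h4, h5, h6⟩ := hmemLQ r hr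
      exact hfixI r h1 h2 h3 h4 h5 h6
  have hLPmapJ : LP.map (⇑(act (sigmaPerm m i)) ∘ fun s => (aN s (j + 1) j : hatG m))
      = LP.map fun s => (aN s (j + 1) j : hatG m) :=
    List.map_congr_left fun s hs => by
      obtain ⟨h1, h2, h3, h4, h5, h6⟩ := hmemLP s hs
      exact hfixJ s h1 h2 h3 h4 h5 h6
  have hLQmapJ : LQ.map (⇑(act (sigmaPerm m i)) ∘ fun s => (aN s (j + 1) j : hatG m))
      = LQ.map fun s => (aN s (j + 1) j : hatG m) :=
    List.map_congr_left fun s hs => by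
      obtain ⟨h1, h2, h3, h4, h5, h6⟩ := hmemLQ s hs
      exact hfixJ s h1 h2 h3 h4 h5 h6
  have hactI : act (sigmaPerm m j) (psi m i) =
      (LP.map fun r => (aN r (i + 1) i : hatG m)).prod *
        ((aN j (i + 1) i : hatG m) * (aN (j + 1) (i + 1) i : hatG m)) *
        (LQ.map fun r => (aN r (i + 1) i : hatG m)).prod := by
    rw [hpsiI, map_mul, map_mul, map_mul, hswapI1, hswapI2, map_list_prod, map_list_prod,
      List.map_map, List.map_map, hLPmapI, hLQmapI]
  have hactJ : act (sigmaPerm m i) (psi m j) =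
      (LQ.map fun s => (aN s (j + 1) j : hatG m)).prod *
        ((aN i (j + 1) j : hatG m) * (aN (i + 1) (j + 1) j : hatG m)) *
        (LP.map fun s => (aN s (j + 1) j : hatG m)).prod := by
    rw [hpsiJ, map_mul, map_mul, map_mul, hswapJ1, hswapJ2, map_list_prod, map_list_prod,
      List.map_map, List.map_map, hLQmapJ, hLPmapJ]
  -- commutation of far-away generators
  have hpair : ∀ r s : ℕ, 1 ≤ r → r ≤ m → r ≠ i → r ≠ i + 1 → 1 ≤ s → s ≤ m → s ≠ j →
      s ≠ j + 1 → ((r ≠ j ∧ r ≠ j + 1) ∨ (s ≠ i ∧ s ≠ i + 1)) →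
      Commute (aN r (i + 1) i : hatG m) (aN s (j + 1) j : hatG m) := by
    intro r s hr1 hr2 hr3 hr4 hs1 hs2 hs3 hs4 hd
    rw [aN_eq hr1 (by omega) hi hr2 (by omega) (by omega) hr4 (by omega) hr3,
        aN_eq hs1 (by omega) hj hs2 (by omega) (by omega) hs4 (by omega) hs3]
    apply hatGen_comm
    rcases hd with ⟨hd1, hd2⟩ | ⟨hd1, hd2⟩
    · apply card_ge_five (a := ⟨r - 1, by omega⟩) (b := ⟨i, by omega⟩) (c := ⟨i - 1, by omega⟩)
        (d := ⟨j, by omega⟩) (e := ⟨j - 1, by omega⟩) <;>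
        first
          | (simp only [ne_eq, Fin.mk.injEq]; omega)
          | (intro x hx;
             simp only [Finset.mem_insert, Finset.mem_singleton] at hx ⊢; tauto)
    · apply card_ge_five (a := ⟨s - 1, by omega⟩) (b := ⟨i, by omega⟩) (c := ⟨i - 1, by omega⟩)
        (d := ⟨j, by omega⟩) (e := ⟨j - 1, by omega⟩) <;>
        first
          | (simp only [ne_eq, Fin.mk.injEq]; omega)
          | (intro x hx;
             simp only [Finset.mem_insert, Finset.mem_singleton] at hx ⊢; tauto)
  have hprodg : ∀ L : List ℕ,
      (∀ r ∈ L, 1 ≤ r ∧ r ≤ m ∧ r ≠ i ∧ r ≠ i + 1 ∧ r ≠ j ∧ r ≠ j + 1) →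
      ∀ s, 1 ≤ s → s ≤ m → s ≠ j → s ≠ j + 1 →
      Commute ((L.map fun r => (aN r (i + 1) i : hatG m)).prod) (aN s (j + 1) j : hatG m) := by
    intro L hL s hs1 hs2 hs3 hs4
    apply Commute.list_prod_left
    intro x hx
    obtain ⟨r, hr, rfl⟩ := List.mem_map.mp hx
    obtain ⟨h1, h2, h3, h4, h5, h6⟩ := hL r hr
    exact hpair r s h1 h2 h3 h4 hs1 hs2 hs3 hs4 (Or.inl ⟨h5, h6⟩)
  have hprodf : ∀ L : List ℕ,
      (∀ s ∈ L, 1 ≤ s ∧ s ≤ m ∧ s ≠ i ∧ s ≠ i + 1 ∧ s ≠ j ∧ s ≠ j + 1) →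
      ∀ r, 1 ≤ r → r ≤ m → r ≠ i → r ≠ i + 1 →
      Commute (aN r (i + 1) i : hatG m) ((L.map fun s => (aN s (j + 1) j : hatG m)).prod) := by
    intro L hL r hr1 hr2 hr3 hr4
    apply Commute.list_prod_right
    intro x hx
    obtain ⟨s, hs, rfl⟩ := List.mem_map.mp hx
    obtain ⟨h1, h2, h3, h4, h5, h6⟩ := hL s hs
    exact hpair r s hr1 hr2 hr3 hr4 h1 h2 h5 h6 (Or.inr ⟨h3, h4⟩)
  have mkC : ∀ L1 L2 : List ℕ,
      (∀ r ∈ L1, 1 ≤ r ∧ r ≤ m ∧ r ≠ i ∧ r ≠ i + 1 ∧ r ≠ j ∧ r ≠ j + 1) →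
      (∀ s ∈ L2, 1 ≤ s ∧ s ≤ m ∧ s ≠ i ∧ s ≠ i + 1 ∧ s ≠ j ∧ s ≠ j + 1) →
      Commute ((L1.map fun r => (aN r (i + 1) i : hatG m)).prod)
        ((L2.map fun s => (aN s (j + 1) j : hatG m)).prod) := by
    intro L1 L2 h1 h2
    apply Commute.list_prod_right
    intro y hy
    obtain ⟨s, hs, rfl⟩ := List.mem_map.mp hy
    obtain ⟨g1, g2, g3, g4, g5, g6⟩ := h2 s hs
    exact hprodg L1 h1 s g1 g2 g5 g6
  -- the core tetrahedron identity
  have hcore : (aN j (i + 1) i : hatG m) * (aN (j + 1) (i + 1) i : hatG m) *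
        (aN (i + 1) (j + 1) j : hatG m) * (aN i (j + 1) j : hatG m) =
      (aN i (j + 1) j : hatG m) * (aN (i + 1) (j + 1) j : hatG m) *
        (aN (j + 1) (i + 1) i : hatG m) * (aN j (i + 1) i : hatG m) := by
    rw [aN_eq hj (by omega) hi (by omega) (by omega) (by omega) (by omega) (by omega) (by omega),
      aN_eq (by omega : 1 ≤ j + 1) (by omega) hi (by omega) (by omega) (by omega) (by omega)
        (by omega) (by omega),
      aN_eq (by omega : 1 ≤ i + 1) (by omega) hj (by omega) (by omega) (by omega) (by omega)
        (by omega) (by omega),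
      aN_eq hi (by omega) hj (by omega) (by omega) (by omega) (by omega) (by omega) (by omega)]
    exact core_identity (a := ⟨i - 1, by omega⟩) (b := ⟨i, by omega⟩) (c := ⟨j - 1, by omega⟩)
      (d := ⟨j, by omega⟩)
      (by simp only [ne_eq, Fin.mk.injEq]; omega) (by simp only [ne_eq, Fin.mk.injEq]; omega)
      (by simp only [ne_eq, Fin.mk.injEq]; omega) (by simp only [ne_eq, Fin.mk.injEq]; omega)
      (by simp only [ne_eq, Fin.mk.injEq]; omega) (by simp only [ne_eq, Fin.mk.injEq]; omega)
  -- assemble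
  simp only [SDmul, phiSigma, SD.mk.injEq]
  refine ⟨hperm, ?_⟩
  rw [hactI, hactJ, hpsiI, hpsiJ]
  exact shuffle _ _ _ _ _ _ _ _
    (mkC LQ LQ hmemLQ hmemLQ)
    (hprodg LQ hmemLQ (i + 1) (by omega) (by omega) (by omega) (by omega))
    (hprodg LQ hmemLQ i (by omega) (by omega) (by omega) (by omega))
    (mkC LQ LP hmemLQ hmemLP)
    (mkC LP LQ hmemLP hmemLQ)
    (hprodg LP hmemLP (i + 1) (by omega) (by omega) (by omega) (by omega))
    (hprodg LP hmemLP i (by omega) (by omega) (by omega) (by omega))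
    (mkC LP LP hmemLP hmemLP)
    ((hprodf LQ hmemLQ j (by omega) (by omega) (by omega) (by omega)).symm)
    ((hprodf LQ hmemLQ (j + 1) (by omega) (by omega) (by omega) (by omega)).symm)
    ((hprodf LP hmemLP j (by omega) (by omega) (by omega) (by omega)).symm)
    ((hprodf LP hmemLP (j + 1) (by omega) (by omega) (by omega) (by omega)).symm)
    hcore

/-- Far commutativity: for `|i − j| > 1`, `φ(σᵢ)·φ(σⱼ) = φ(σⱼ)·φ(σᵢ)` in `Σₘ ⋉ Ĝ³ₘ`,
where `Σₘ` acts on `Ĝ³ₘ` by renumbering the indices of the generators. -/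
theorem stmt_14 (m : ℕ) (act : Equiv.Perm (Fin m) →* MulAut (hatG m))
    (hact : ∀ (τ : Equiv.Perm (Fin m)) (i j k : Fin m)
        (hij : i ≠ j) (hjk : j ≠ k) (hik : i ≠ k),
      act τ (hatGen i j k hij hjk hik) =
        hatGen (τ i) (τ j) (τ k) (fun h => hij (τ.injective h))
          (fun h => hjk (τ.injective h)) (fun h => hik (τ.injective h)))
    (i j : ℕ) (hi : 1 ≤ i) (hi' : i < m) (hj : 1 ≤ j) (hj' : j < m)
    (hfar : i + 1 < j ∨ j + 1 < i) :
    SDmul act (phiSigma m i) (phiSigma m j) = SDmul act (phiSigma m j) (phiSigma m i) := by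
  rcases hfar with h | h
  · exact key m act hact i j hi hi' hj hj' h
  · exact (key m act hact j i hj hj' hi hi' h).symm
end
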